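/- arXiv:2210.05676 — 4 statements merged into one kernel-verified Lean document; each statement's English description precedes it below -/
import Mathlib

section
/- The Contrastive Log-ratio Upper Bound holds: I(X;Z) ≤ E_{p(x,z)}[log p(z|x)] − E_{p(x)p(z)}[log p(z|x)], i.e., the difference between the CLUB expression and the mutual information is non-negative. -/
/-!
Write `p(x)`, `p(z)` for the marginals. Splitting the logarithm gives
`I(X;Z) = E_{p(x,z)}[log p(z|x)] - ∑_z p(z) log p(z)`, so the bound reduces to
`E_{p(x)}[log p(z|x)] ≤ log p(z)` for each `z`. Since `E_{p(x)}[p(z|x)] = p(z)`, this is Jensen's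
inequality for the concave logarithm.
-/

open Finset Real

theorem Real.sum_mul_log_le_log_sum_mul {ι : Type*} {s : Finset ι} {w v : ι → ℝ}
    (hw : ∀ i ∈ s, 0 ≤ w i) (hw1 : ∑ i ∈ s, w i = 1) (hv : ∀ i ∈ s, 0 < v i) :
    ∑ i ∈ s, w i * log (v i) ≤ log (∑ i ∈ s, w i * v i) :=
  strictConcaveOn_log_Ioi.concaveOn.le_map_sum hw hw1 hv

theorem Fintype.sum_pos_of_forall_pos {ι : Type*} [Fintype ι] {f : ι → ℝ} (hf : ∀ i, 0 < f i)
    (i : ι) : 0 < ∑ j, f j :=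
  Finset.sum_pos (fun j _ => hf j) ⟨i, mem_univ i⟩

section JointDistribution

variable {α β : Type*} [Fintype α] [Fintype β] {p : α → β → ℝ}

theorem sum_mul_log_div_marginals (hp : ∀ x z, 0 < p x z) :
    ∑ x, ∑ z, p x z * log (p x z / ((∑ z', p x z') * ∑ x', p x' z)) =
      ∑ x, ∑ z, p x z * log (p x z / ∑ z', p x z') -
        ∑ z, (∑ x, p x z) * log (∑ x, p x z) := by
  have hsplit : ∀ x z, p x z * log (p x z / ((∑ z', p x z') * ∑ x', p x' z)) =
      p x z * log (p x z / ∑ z', p x z') - p x z * log (∑ x', p x' z) := fun x z => by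
    have hX := Fintype.sum_pos_of_forall_pos (hp x) z
    have hZ := Fintype.sum_pos_of_forall_pos (hp · z) x
    rw [div_mul_eq_div_div, log_div (div_pos (hp x z) hX).ne' hZ.ne', mul_sub]
  simp only [hsplit, sum_sub_distrib]
  rw [sum_comm (f := fun x z => p x z * log (∑ x', p x' z))]
  simp only [← sum_mul]

theorem sum_marginal_mul_log_cond_le_log_marginal (hp : ∀ x z, 0 < p x z)
    (hp1 : ∑ x, ∑ z, p x z = 1) (z : β) :
    ∑ x, (∑ z', p x z') * log (p x z / ∑ z', p x z') ≤ log (∑ x, p x z) := by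
  have hX : ∀ x, 0 < ∑ z', p x z' := fun x => Fintype.sum_pos_of_forall_pos (hp x) z
  have hmean : ∑ x, (∑ z', p x z') * (p x z / ∑ z', p x z') = ∑ x, p x z :=
    sum_congr rfl fun x _ => mul_div_cancel₀ _ (hX x).ne'
  rw [← hmean]
  exact sum_mul_log_le_log_sum_mul (fun x _ => (hX x).le) hp1
    fun x _ => div_pos (hp x z) (hX x)

theorem sum_product_marginals_mul_log_cond_le (hp : ∀ x z, 0 < p x z)
    (hp1 : ∑ x, ∑ z, p x z = 1) :
    ∑ x, ∑ z, (∑ z', p x z') * (∑ x', p x' z) * log (p x z / ∑ z', p x z') ≤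
      ∑ z, (∑ x, p x z) * log (∑ x, p x z) := by
  rw [sum_comm]
  refine sum_le_sum fun z _ => ?_
  have hZ : 0 ≤ ∑ x, p x z := sum_nonneg fun x _ => (hp x z).le
  calc ∑ x, (∑ z', p x z') * (∑ x', p x' z) * log (p x z / ∑ z', p x z')
      = (∑ x, p x z) * ∑ x, (∑ z', p x z') * log (p x z / ∑ z', p x z') := by
        rw [mul_sum]; exact sum_congr rfl fun x _ => by ring
    _ ≤ (∑ x, p x z) * log (∑ x, p x z) :=
        mul_le_mul_of_nonneg_left (sum_marginal_mul_log_cond_le_log_marginal hp hp1 z) hZ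

end JointDistribution

/-- Contrastive Log-ratio Upper Bound (CLUB):
`I(X;Z) ≤ E_{p(x,z)}[log p(z|x)] − E_{p(x)p(z)}[log p(z|x)]`. -/
theorem club_upper_bound {α β : Type*} [Fintype α] [Fintype β]
    (p : α → β → ℝ)
    (hp0 : ∀ x z, 0 < p x z) (hp1 : ∑ x, ∑ z, p x z = 1) :
    ∑ x, ∑ z, p x z *
      Real.log (p x z / ((∑ z', p x z') * (∑ x', p x' z))) ≤
    (∑ x, ∑ z, p x z * Real.log (p x z / (∑ z', p x z'))) -
    (∑ x, ∑ z, (∑ z', p x z') * (∑ x', p x' z) *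
      Real.log (p x z / (∑ z', p x z'))) := by
  rw [sum_mul_log_div_marginals hp0]
  linarith [sum_product_marginals_mul_log_cond_le hp0 hp1]
end

section
/- The gap between the CLUB expression and the mutual information equals E_{p(z)}[log p(z) − E_{p(x)}[log p(z|x)]], i.e., E_{p(x,z)}[log p(z|x)] − E_{p(x)p(z)}[log p(z|x)] − I(X;Z) = ∑_z p(z)(log p(z) − ∑_x p(x) log p(z|x)). -/
/-- The gap between the CLUB expression and the mutual information equals
`∑_z p(z) (log p(z) − ∑_x p(x) log p(z|x))`. -/
theorem club_gap_identity {α β : Type*} [Fintype α] [Fintype β]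
    (p : α → β → ℝ)
    (hp0 : ∀ x z, 0 < p x z) (hp1 : ∑ x, ∑ z, p x z = 1) :
    (∑ x, ∑ z, p x z * Real.log (p x z / (∑ z', p x z'))) -
    (∑ x, ∑ z, (∑ z', p x z') * (∑ x', p x' z) *
      Real.log (p x z / (∑ z', p x z'))) -
    (∑ x, ∑ z, p x z *
      Real.log (p x z / ((∑ z', p x z') * (∑ x', p x' z)))) =
    ∑ z, (∑ x', p x' z) *
      (Real.log (∑ x', p x' z) -
        ∑ x, (∑ z', p x z') * Real.log (p x z / (∑ z', p x z'))) := by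
  have hα : (Finset.univ : Finset α).Nonempty := by
    by_contra h
    rw [Finset.not_nonempty_iff_eq_empty] at h
    rw [h] at hp1; simp at hp1
  have hβ : (Finset.univ : Finset β).Nonempty := by
    by_contra h
    rw [Finset.not_nonempty_iff_eq_empty] at h
    rw [h] at hp1; simp at hp1
  have hpX : ∀ x, 0 < ∑ z', p x z' := fun x =>
    Finset.sum_pos (fun z _ => hp0 x z) hβ
  have hpZ : ∀ z, 0 < ∑ x', p x' z := fun z =>
    Finset.sum_pos (fun x _ => hp0 x z) hα
  have hlog : ∀ x z, Real.log (p x z / ((∑ z', p x z') * (∑ x', p x' z))) =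
      Real.log (p x z / (∑ z', p x z')) - Real.log (∑ x', p x' z) := by
    intro x z
    rw [div_mul_eq_div_div, Real.log_div (div_pos (hp0 x z) (hpX x)).ne' (hpZ z).ne']
  simp only [hlog, mul_sub, Finset.sum_sub_distrib]
  have hC : ∑ x, ∑ z, p x z * Real.log (∑ x', p x' z) =
      ∑ z, (∑ x', p x' z) * Real.log (∑ x', p x' z) := by
    rw [Finset.sum_comm]
    simp [Finset.sum_mul]
  have hB : ∑ x, ∑ z, (∑ z', p x z') * (∑ x', p x' z) *
      Real.log (p x z / (∑ z', p x z')) =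
      ∑ z, (∑ x', p x' z) *
        ∑ x, (∑ z', p x z') * Real.log (p x z / (∑ z', p x z')) := by
    rw [Finset.sum_comm]
    refine Finset.sum_congr rfl fun z _ => ?_
    rw [Finset.mul_sum]
    exact Finset.sum_congr rfl fun x _ => by ring
  rw [hC, hB]
  ring
end

section
/- The variational CLUB expression remains an upper bound on mutual information if the approximation condition D_KL(p(x,z)‖q'(x,z)) ≤ D_KL(p(x)p(z)‖q'(x,z)) holds, where q'(x,z) = p(x)q(z|x); that is, under this condition, I(X;Z) ≤ E_{p(x,z)}[log q(z|x)] − E_{p(x)p(z)}[log q(z|x)]. -/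
/-- The variational CLUB remains an upper bound on mutual information provided
`D_KL(p(x,z) ‖ p(x) q(z|x)) ≤ D_KL(p(x)p(z) ‖ p(x) q(z|x))`. -/
theorem variational_club_upper_bound {α β : Type*} [Fintype α] [Fintype β]
    (p : α → β → ℝ) (q : α → β → ℝ)
    (hp0 : ∀ x z, 0 < p x z) (hp1 : ∑ x, ∑ z, p x z = 1)
    (hq0 : ∀ x z, 0 < q x z) (hq1 : ∀ x, ∑ z, q x z = 1)
    (hcond :
      ∑ x, ∑ z, p x z * Real.log (p x z / ((∑ z', p x z') * q x z)) ≤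
      ∑ x, ∑ z, (∑ z', p x z') * (∑ x', p x' z) *
        Real.log ((∑ z', p x z') * (∑ x', p x' z) /
          ((∑ z', p x z') * q x z))) :
    ∑ x, ∑ z, p x z *
      Real.log (p x z / ((∑ z', p x z') * (∑ x', p x' z))) ≤
    (∑ x, ∑ z, p x z * Real.log (q x z)) -
    (∑ x, ∑ z, (∑ z', p x z') * (∑ x', p x' z) * Real.log (q x z)) := by
  have hpx0 : ∀ x, 0 < ∑ z', p x z' := by
    intro x
    have hβ : (Finset.univ : Finset β).Nonempty := by
      by_contra h
      rw [Finset.not_nonempty_iff_eq_empty] at h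
      simp [h] at hp1
    exact Finset.sum_pos (fun z _ => hp0 x z) hβ
  have hpz0 : ∀ z, 0 < ∑ x', p x' z := by
    intro z
    have hα : (Finset.univ : Finset α).Nonempty := by
      by_contra h
      rw [Finset.not_nonempty_iff_eq_empty] at h
      simp [h] at hp1
    exact Finset.sum_pos (fun x _ => hp0 x z) hα
  -- marginal sums are 1
  have hsumx : ∑ x, ∑ z', p x z' = 1 := hp1
  have hsumz : ∑ z, ∑ x', p x' z = 1 := by rw [Finset.sum_comm]; exact hp1
  -- expand hcond LHS
  have e1 : ∑ x, ∑ z, p x z * Real.log (p x z / ((∑ z', p x z') * q x z)) =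
      (∑ x, ∑ z, p x z * Real.log (p x z))
      - (∑ x, ∑ z, p x z * Real.log (∑ z', p x z'))
      - (∑ x, ∑ z, p x z * Real.log (q x z)) := by
    rw [← Finset.sum_sub_distrib, ← Finset.sum_sub_distrib]
    refine Finset.sum_congr rfl fun x _ => ?_
    rw [← Finset.sum_sub_distrib, ← Finset.sum_sub_distrib]
    refine Finset.sum_congr rfl fun z _ => ?_
    rw [Real.log_div (hp0 x z).ne' (mul_pos (hpx0 x) (hq0 x z)).ne',
      Real.log_mul (hpx0 x).ne' (hq0 x z).ne']
    ring
  -- expand hcond RHS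
  have e2 : ∑ x, ∑ z, (∑ z', p x z') * (∑ x', p x' z) *
        Real.log ((∑ z', p x z') * (∑ x', p x' z) / ((∑ z', p x z') * q x z)) =
      (∑ x, ∑ z, (∑ z', p x z') * (∑ x', p x' z) * Real.log (∑ x', p x' z))
      - (∑ x, ∑ z, (∑ z', p x z') * (∑ x', p x' z) * Real.log (q x z)) := by
    rw [← Finset.sum_sub_distrib]
    refine Finset.sum_congr rfl fun x _ => ?_
    rw [← Finset.sum_sub_distrib]
    refine Finset.sum_congr rfl fun z _ => ?_
    rw [Real.log_div (mul_pos (hpx0 x) (hpz0 z)).ne' (mul_pos (hpx0 x) (hq0 x z)).ne',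
      Real.log_mul (hpx0 x).ne' (hpz0 z).ne',
      Real.log_mul (hpx0 x).ne' (hq0 x z).ne']
    ring
  -- expand goal LHS
  have e3 : ∑ x, ∑ z, p x z * Real.log (p x z / ((∑ z', p x z') * (∑ x', p x' z))) =
      (∑ x, ∑ z, p x z * Real.log (p x z))
      - (∑ x, ∑ z, p x z * Real.log (∑ z', p x z'))
      - (∑ x, ∑ z, p x z * Real.log (∑ x', p x' z)) := by
    rw [← Finset.sum_sub_distrib, ← Finset.sum_sub_distrib]
    refine Finset.sum_congr rfl fun x _ => ?_
    rw [← Finset.sum_sub_distrib, ← Finset.sum_sub_distrib]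
    refine Finset.sum_congr rfl fun z _ => ?_
    rw [Real.log_div (hp0 x z).ne' (mul_pos (hpx0 x) (hpz0 z)).ne',
      Real.log_mul (hpx0 x).ne' (hpz0 z).ne']
    ring
  -- key identity: both weightings give ∑ pz log pz
  have e4 : ∑ x, ∑ z, p x z * Real.log (∑ x', p x' z) =
      ∑ x, ∑ z, (∑ z', p x z') * (∑ x', p x' z) * Real.log (∑ x', p x' z) := by
    rw [Finset.sum_comm]
    conv_rhs => rw [Finset.sum_comm]
    refine Finset.sum_congr rfl fun z _ => ?_
    rw [← Finset.sum_mul]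
    have : ∑ x, (∑ z', p x z') * (∑ x', p x' z) * Real.log (∑ x', p x' z) =
        (∑ x, ∑ z', p x z') * ((∑ x', p x' z) * Real.log (∑ x', p x' z)) := by
      rw [Finset.sum_mul]
      refine Finset.sum_congr rfl fun x _ => ?_
      ring
    rw [this, hsumx]
    ring
  rw [e1, e2] at hcond
  rw [e3]
  linarith [hcond, e4]
end

section
/- For the exact conditional p(z|x), the CLUB gap E_{p(x,z)}[log p(z|x)] − E_{p(x)p(z)}[log p(z|x)] − I(X;Z) is zero if and only if X and Z are independent. -/
/-- The CLUB gap for the exact conditional is zero iff `X` and `Z` are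
independent. -/
theorem club_gap_zero_iff_indep {α β : Type*} [Fintype α] [Fintype β]
    (p : α → β → ℝ)
    (hp0 : ∀ x z, 0 < p x z) (hp1 : ∑ x, ∑ z, p x z = 1) :
    (∑ x, ∑ z, p x z * Real.log (p x z / (∑ z', p x z'))) -
    (∑ x, ∑ z, (∑ z', p x z') * (∑ x', p x' z) *
      Real.log (p x z / (∑ z', p x z'))) -
    (∑ x, ∑ z, p x z *
      Real.log (p x z / ((∑ z', p x z') * (∑ x', p x' z)))) = 0 ↔
    ∀ x z, p x z = (∑ z', p x z') * (∑ x', p x' z) := by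
  rcases isEmpty_or_nonempty α with hα | hα
  · simp at hp1
  rcases isEmpty_or_nonempty β with hβ | hβ
  · simp at hp1
  set pX : α → ℝ := fun x => ∑ z', p x z' with hpXdef
  set pZ : β → ℝ := fun z => ∑ x', p x' z with hpZdef
  have hXpos : ∀ x, 0 < pX x := fun x =>
    Finset.sum_pos (fun z _ => hp0 x z) Finset.univ_nonempty
  have hZpos : ∀ z, 0 < pZ z := fun z =>
    Finset.sum_pos (fun x _ => hp0 x z) Finset.univ_nonempty
  have hsumX : ∑ x, pX x = 1 := hp1
  -- the nonnegative "weight" of each term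
  set w : α → β → ℝ := fun x z =>
    pX x * pZ z * ((p x z / (pX x * pZ z) - 1) -
      Real.log (p x z / (pX x * pZ z))) with hwdef
  have htpos : ∀ x z, 0 < p x z / (pX x * pZ z) := fun x z =>
    div_pos (hp0 x z) (mul_pos (hXpos x) (hZpos z))
  have hwnn : ∀ x z, 0 ≤ w x z := by
    intro x z
    apply mul_nonneg (mul_pos (hXpos x) (hZpos z)).le
    have := Real.log_le_sub_one_of_pos (htpos x z)
    linarith
  -- key algebraic identity
  have key : (∑ x, ∑ z, p x z * Real.log (p x z / pX x)) -
      (∑ x, ∑ z, pX x * pZ z * Real.log (p x z / pX x)) -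
      (∑ x, ∑ z, p x z * Real.log (p x z / (pX x * pZ z))) =
      ∑ x, ∑ z, w x z := by
    have hterm : ∀ x z, p x z * Real.log (p x z / pX x) -
        pX x * pZ z * Real.log (p x z / pX x) -
        p x z * Real.log (p x z / (pX x * pZ z)) =
        w x z + (p x z - pX x * pZ z) * (Real.log (pZ z) - 1) := by
      intro x z
      have hX := (hXpos x).ne'
      have hZ := (hZpos z).ne'
      have hsplit : p x z / pX x = p x z / (pX x * pZ z) * pZ z := by
        field_simp
      rw [hsplit, Real.log_mul (htpos x z).ne' hZ, hwdef]
      have hc : pX x * pZ z * (p x z / (pX x * pZ z)) = p x z := by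
        field_simp
      set L := Real.log (p x z / (pX x * pZ z))
      set M := Real.log (pZ z)
      linear_combination -hc
    have hcorr : ∑ x, ∑ z, (p x z - pX x * pZ z) * (Real.log (pZ z) - 1) = 0 := by
      rw [Finset.sum_comm]
      apply Finset.sum_eq_zero
      intro z _
      rw [← Finset.sum_mul]
      have hz : ∑ x, (p x z - pX x * pZ z) = 0 := by
        rw [Finset.sum_sub_distrib, ← Finset.sum_mul, hsumX]
        simp [hpZdef]
      rw [hz, zero_mul]
    calc (∑ x, ∑ z, p x z * Real.log (p x z / pX x)) -
        (∑ x, ∑ z, pX x * pZ z * Real.log (p x z / pX x)) -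
        (∑ x, ∑ z, p x z * Real.log (p x z / (pX x * pZ z)))
        = ∑ x, ∑ z, (p x z * Real.log (p x z / pX x) -
            pX x * pZ z * Real.log (p x z / pX x) -
            p x z * Real.log (p x z / (pX x * pZ z))) := by
          simp only [← Finset.sum_sub_distrib]
      _ = ∑ x, ∑ z, (w x z + (p x z - pX x * pZ z) * (Real.log (pZ z) - 1)) := by
          exact Finset.sum_congr rfl fun x _ =>
            Finset.sum_congr rfl fun z _ => hterm x z
      _ = (∑ x, ∑ z, w x z) +
          ∑ x, ∑ z, (p x z - pX x * pZ z) * (Real.log (pZ z) - 1) := by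
          simp only [Finset.sum_add_distrib]
      _ = ∑ x, ∑ z, w x z := by rw [hcorr, add_zero]
  rw [key]
  constructor
  · intro h x z
    have hall : ∀ x ∈ Finset.univ, ∀ z ∈ (Finset.univ : Finset β), w x z = 0 := by
      have h1 := (Finset.sum_eq_zero_iff_of_nonneg
        (fun x _ => Finset.sum_nonneg fun z _ => hwnn x z)).mp h
      intro x _
      exact fun z hz => (Finset.sum_eq_zero_iff_of_nonneg
        (fun z _ => hwnn x z)).mp (h1 x (Finset.mem_univ x)) z hz
    have hw0 := hall x (Finset.mem_univ x) z (Finset.mem_univ z)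
    have hXZ : 0 < pX x * pZ z := mul_pos (hXpos x) (hZpos z)
    have h2 : (p x z / (pX x * pZ z) - 1) -
        Real.log (p x z / (pX x * pZ z)) = 0 := by
      rcases mul_eq_zero.mp hw0 with h' | h'
      · exact absurd h' hXZ.ne'
      · exact h'
    have ht1 : p x z / (pX x * pZ z) = 1 := by
      by_contra hne
      have := Real.log_lt_sub_one_of_pos (htpos x z) hne
      linarith
    have := (div_eq_one_iff_eq hXZ.ne').mp ht1
    exact this
  · intro h
    apply Finset.sum_eq_zero
    intro x _
    apply Finset.sum_eq_zero
    intro z _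
    have ht1 : p x z / (pX x * pZ z) = 1 := by
      rw [h x z]
      exact div_self (mul_pos (hXpos x) (hZpos z)).ne'
    simp [hwdef, ht1]
end
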